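/- Every maximal clique of G that is not maximal in G' = G+H (a subsumed clique) is contained in some new maximal clique c ∈ C(G') \ C(G), and is a maximal clique of the graph obtained from c (viewed as a complete graph) by removing the edges of H. -/

import Mathlib

open SimpleGraph

/-- `s` is a maximal clique of the simple graph `G`. -/
def MaxClique {V : Type*} (G : SimpleGraph V) (s : Set V) : Prop :=
  G.IsClique s ∧ ∀ t : Set V, G.IsClique t → s ⊆ t → s = t

/-- The graph obtained from `G` by adding the edge `(u,v)`. -/
def addEdge {V : Type*} (G : SimpleGraph V) (u v : V) : SimpleGraph V :=
  G ⊔ SimpleGraph.fromEdgeSet {s(u, v)}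

/-- The graph obtained from `G` by adding the set of edges `H`. -/
def addEdges {V : Type*} (G : SimpleGraph V) (H : Set (Sym2 V)) : SimpleGraph V :=
  G ⊔ SimpleGraph.fromEdgeSet H

/-- The number of maximal cliques of `G`. -/
noncomputable def numMaxCliques {V : Type*} (G : SimpleGraph V) : ℕ :=
  Nat.card {s : Set V // MaxClique G s}

/-- `f k`: the maximum possible number of maximal cliques in a graph on `k` vertices. -/
noncomputable def maxNumMaxCliques (k : ℕ) : ℕ :=
  sSup {m | ∃ G : SimpleGraph (Fin k), m = numMaxCliques G}

/-!
Extend `c'` to a maximal clique `c` of `G + H`; it differs from `c'` because `c'` is not maximal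
in `G + H`. Inside the clique `c` of `G + H`, a set avoids the edges of `H` exactly when it is a
clique of `G`, so the maximality of `c'` in `G` is maximality of `c'` in `c - H`.
-/

namespace SimpleGraph

variable {V : Type*} {G K : SimpleGraph V} {s c : Set V}

theorem maxClique_iff_maximal : MaxClique G s ↔ Maximal G.IsClique s :=
  and_congr_right fun _ => forall₃_congr fun _ _ hst => ⟨Eq.ge, hst.antisymm⟩

theorem IsClique.exists_maxClique_superset [Finite V] (hs : G.IsClique s) :
    ∃ c, MaxClique G c ∧ s ⊆ c := by
  obtain ⟨c, hsc, hc⟩ := Finite.exists_le_maximal hs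
  exact ⟨c, maxClique_iff_maximal.2 hc, hsc⟩

theorem MaxClique.eq_of_subset (hs : MaxClique G s) (hc : G.IsClique c) (hsc : s ⊆ c) : s = c :=
  hs.2 c hc hsc

theorem IsClique.inf {G₁ G₂ : SimpleGraph V} (h₁ : G₁.IsClique s) (h₂ : G₂.IsClique s) :
    (G₁ ⊓ G₂).IsClique s :=
  fun _ hx _ hy hne => ⟨h₁ hx hy hne, h₂ hx hy hne⟩

theorem le_top_deleteEdges_of_disjoint {H : Set (Sym2 V)} (h : Disjoint H G.edgeSet) :
    G ≤ (⊤ : SimpleGraph V).deleteEdges H := fun _ _ hxy =>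
  deleteEdges_adj.2 ⟨hxy.ne, fun hH => h.ne_of_mem hH hxy rfl⟩

theorem addEdges_inf_top_deleteEdges_le (H : Set (Sym2 V)) :
    addEdges G H ⊓ (⊤ : SimpleGraph V).deleteEdges H ≤ G := by
  rintro x y ⟨hG | hH, hK⟩
  · exact hG
  · exact absurd ((fromEdgeSet_adj _).1 hH).1 (deleteEdges_adj.1 hK).2

theorem maxClique_induce_preimage (hsc : s ⊆ c) (hs : K.IsClique s)
    (hmax : ∀ t ⊆ c, K.IsClique t → s ⊆ t → s = t) :
    MaxClique (K.induce c) (Subtype.val ⁻¹' s) := by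
  refine ⟨isClique_induce_iff.2 (hs.subset (Set.image_preimage_subset _ _)), fun t ht hst => ?_⟩
  have hs_img : s ⊆ Subtype.val '' t := fun x hx => ⟨⟨x, hsc hx⟩, hst hx, rfl⟩
  rw [hmax _ (Subtype.coe_image_subset c t) (isClique_induce_iff.1 ht) hs_img,
    Set.preimage_image_eq t Subtype.val_injective]

end SimpleGraph

theorem stmt_9_general {V : Type*} [Fintype V] (G : SimpleGraph V) (H : Set (Sym2 V))
    (hdisj : Disjoint H G.edgeSet) (c' : Set V)
    (hmax : MaxClique G c') (hnot : ¬ MaxClique (addEdges G H) c') :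
    ∃ c : Set V, MaxClique (addEdges G H) c ∧ ¬ MaxClique G c ∧ c' ⊆ c ∧
      MaxClique (((⊤ : SimpleGraph V).deleteEdges H).induce c) (Subtype.val ⁻¹' c') := by
  obtain ⟨c, hc, hc'c⟩ :=
    (hmax.1.mono (le_sup_left : G ≤ addEdges G H)).exists_maxClique_superset
  have hc_not_maxG : ¬ MaxClique G c := fun hcG => hnot (hmax.eq_of_subset hcG.1 hc'c ▸ hc)
  have hc'_clique : ((⊤ : SimpleGraph V).deleteEdges H).IsClique c' :=
    hmax.1.mono (le_top_deleteEdges_of_disjoint hdisj)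
  refine ⟨c, hc, hc_not_maxG, hc'c, maxClique_induce_preimage hc'c hc'_clique ?_⟩
  intro t htc ht hc't
  have htG : G.IsClique t := ((hc.1.subset htc).inf ht).mono (addEdges_inf_top_deleteEdges_le H)
  exact hmax.eq_of_subset htG hc't

theorem stmt_9 {V : Type*} [Fintype V] (G : SimpleGraph V) (H : Set (Sym2 V))
    (hdisj : Disjoint H G.edgeSet) (hdiag : ∀ e ∈ H, ¬ e.IsDiag) (c' : Set V)
    (hmax : MaxClique G c') (hnot : ¬ MaxClique (addEdges G H) c') :
    ∃ c : Set V, MaxClique (addEdges G H) c ∧ ¬ MaxClique G c ∧ c' ⊆ c ∧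
      MaxClique (((⊤ : SimpleGraph V).deleteEdges H).induce c) (Subtype.val ⁻¹' c') :=
  stmt_9_general G H hdisj c' hmax hnot
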